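/- Let 𝔐 be a class of preference models and ★ a dynamic operator closed over 𝔐. The schemata (1) [★φ][≤]ξ → (¬φ → [≤](¬φ → [★φ]ξ)), (2) [★φ][<]ξ → (¬φ → [<](¬φ → [★φ]ξ)), (3) [≤][★φ]ξ → (¬φ → [★φ][≤](¬φ → ξ)), (4) [<][★φ]ξ → (¬φ → [★φ][<](¬φ → ξ)) are valid in ⟨𝔐, ★⟩ for all φ ∈ L_0 and ξ ∈ L_≤(★) if and only if ★ is 𝔐-DP2-compliant. -/

import Mathlib

inductive PForm (P : Type) : Type
  | atom : P → PForm P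
  | neg  : PForm P → PForm P
  | and  : PForm P → PForm P → PForm P

inductive DForm (P : Type) : Type
  | atom  : P → DForm P
  | neg   : DForm P → DForm P
  | and   : DForm P → DForm P → DForm P
  | all   : DForm P → DForm P
  | boxLe : DForm P → DForm P
  | boxLt : DForm P → DForm P
  | dyn   : PForm P → DForm P → DForm P

structure PrefModel (P : Type) where
  W : Type
  le : W → W → Prop
  refl : ∀ w, le w w
  trans : ∀ w₁ w₂ w₃, le w₁ w₂ → le w₂ w₃ → le w₁ w₃
  wf : WellFounded (fun w w' => le w w' ∧ ¬ le w' w)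
  val : P → Set W

namespace PrefModel
variable {P : Type}
def lt (M : PrefModel P) (w w' : M.W) : Prop := M.le w w' ∧ ¬ M.le w' w
def Min (M : PrefModel P) (S : Set M.W) : Set M.W :=
  {w | w ∈ S ∧ ¬ ∃ w' ∈ S, M.le w' w ∧ ¬ M.le w w'}
end PrefModel

def psat {P : Type} (M : PrefModel P) : PForm P → M.W → Prop
  | .atom p, w => w ∈ M.val p
  | .neg φ, w => ¬ psat M φ w
  | .and φ ψ, w => psat M φ w ∧ psat M ψ w

def pext {P : Type} (M : PrefModel P) (φ : PForm P) : Set M.W := {w | psat M φ w}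

structure DynOp (P : Type) where
  rel : (M : PrefModel P) → PForm P → M.W → M.W → Prop
  refl : ∀ M φ w, rel M φ w w
  trans : ∀ M φ w₁ w₂ w₃, rel M φ w₁ w₂ → rel M φ w₂ w₃ → rel M φ w₁ w₃
  wf : ∀ M φ, WellFounded (fun w w' => rel M φ w w' ∧ ¬ rel M φ w' w)

def DynOp.apply {P : Type} (s : DynOp P) (M : PrefModel P) (φ : PForm P) : PrefModel P where
  W := M.W
  le := s.rel M φ
  refl := s.refl M φ
  trans := s.trans M φ
  wf := s.wf M φ
  val := M.val

def DynOp.srel {P : Type} (s : DynOp P) (M : PrefModel P) (φ : PForm P) (w w' : M.W) : Prop :=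
  s.rel M φ w w' ∧ ¬ s.rel M φ w' w

def PForm.toD {P : Type} : PForm P → DForm P
  | .atom p => .atom p
  | .neg φ => .neg φ.toD
  | .and φ ψ => .and φ.toD ψ.toD

namespace DForm
variable {P : Type}
def imp (ξ ψ : DForm P) : DForm P := .neg (.and ξ (.neg ψ))
def iff (ξ ψ : DForm P) : DForm P := .and (imp ξ ψ) (imp ψ ξ)
def or (ξ ψ : DForm P) : DForm P := .neg (.and (.neg ξ) (.neg ψ))
def exi (ξ : DForm P) : DForm P := .neg (.all (.neg ξ))
def diaLt (ξ : DForm P) : DForm P := .neg (.boxLt (.neg ξ))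
def mu (ξ : DForm P) : DForm P := .and ξ (.neg (diaLt ξ))
def bel (ψ χ : DForm P) : DForm P := .all (imp (mu χ) ψ)
end DForm

def dsat {P : Type} (s : DynOp P) : DForm P → (M : PrefModel P) → M.W → Prop
  | .atom p, M, w => w ∈ M.val p
  | .neg ξ, M, w => ¬ dsat s ξ M w
  | .and ξ₁ ξ₂, M, w => dsat s ξ₁ M w ∧ dsat s ξ₂ M w
  | .all ξ, M, _ => ∀ w', dsat s ξ M w'
  | .boxLe ξ, M, w => ∀ w', M.le w' w → dsat s ξ M w'
  | .boxLt ξ, M, w => ∀ w', M.lt w' w → dsat s ξ M w'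
  | .dyn φ ξ, M, w => dsat s ξ (s.apply M φ) w

def ClosedOver {P : Type} (s : DynOp P) (𝔐 : Set (PrefModel P)) : Prop :=
  ∀ M ∈ 𝔐, ∀ φ : PForm P, s.apply M φ ∈ 𝔐

/-- `★` is `𝔐`-DP2-compliant. -/
def DP2Compliant {P : Type} (s : DynOp P) (𝔐 : Set (PrefModel P)) : Prop :=
  ∀ M ∈ 𝔐, ∀ (φ : PForm P) (w w' : M.W), ¬ psat M φ w → ¬ psat M φ w' →
    -- (DP2a), non-strict and strict versions
    ((s.rel M φ w w' → ∀ ξ : DForm P, dsat s (.dyn φ ξ) M w →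
        ∃ w'' : M.W, ¬ psat M φ w'' ∧ dsat s (.dyn φ ξ) M w'' ∧ M.le w'' w') ∧
     (s.srel M φ w w' → ∀ ξ : DForm P, dsat s (.dyn φ ξ) M w →
        ∃ w'' : M.W, ¬ psat M φ w'' ∧ dsat s (.dyn φ ξ) M w'' ∧ M.lt w'' w') ∧
    -- (DP2b), non-strict and strict versions
     (M.le w w' → ∀ ξ : DForm P, dsat s (.dyn φ ξ) M w →
        ∃ w'' : M.W, ¬ psat M φ w'' ∧ dsat s (.dyn φ ξ) M w'' ∧ s.rel M φ w'' w') ∧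
     (M.lt w w' → ∀ ξ : DForm P, dsat s (.dyn φ ξ) M w →
        ∃ w'' : M.W, ¬ psat M φ w'' ∧ dsat s (.dyn φ ξ) M w'' ∧ s.srel M φ w'' w'))

/-!
Every schema and every DP2 clause concerns a pair of relations `R`, `Q` (`≤` or `<` of `M` and the
matching relation of `★(M, φ)`) and the truth sets `T ξ = ⟦[★φ]ξ⟧_M` on `¬φ`-worlds: the schema
reads `[Q]T ξ → (¬φ → [R](¬φ → T ξ))`, the clause says that if `w R w'` and `w ∈ T ξ` then some
`w'' ∈ T ξ` has `w'' Q w'`. Since the truth sets are closed under complement, these are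
contrapositives of each other: the schema for `¬φ → ¬ξ` yields the clause for `ξ`, and the clause
for `¬ξ` yields the schema for `ξ`.
-/

section Abstract

variable {α ι : Type*} (R Q : α → α → Prop) (N : α → Prop) (T : ι → α → Prop)

def BoxSchema : Prop :=
  ∀ i w, (∀ v, Q v w → T i v) → N w → ∀ u, R u w → N u → T i u

def WitnessCondition : Prop :=
  ∀ w w', N w → N w' → R w w' → ∀ i, T i w → ∃ w'', N w'' ∧ T i w'' ∧ Q w'' w'

variable {R Q N T}

theorem witnessCondition_of_boxSchema (hrel : ∀ i, ∃ j, ∀ a, T j a ↔ (N a → ¬ T i a))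
    (h : BoxSchema R Q N T) : WitnessCondition R Q N T := by
  intro w w' hw hw' hR i hTw
  by_contra hnone
  push Not at hnone
  obtain ⟨j, hj⟩ := hrel i
  have hTjw := h j w' (fun v hQ => (hj v).2 fun hNv hTv => hnone v hNv hTv hQ) hw' w hR hw
  exact (hj w).1 hTjw hw hTw

theorem boxSchema_of_witnessCondition (hneg : ∀ i, ∃ j, ∀ a, T j a ↔ ¬ T i a)
    (h : WitnessCondition R Q N T) : BoxSchema R Q N T := by
  intro i w hbox hw u hR hu
  by_contra hTu
  obtain ⟨j, hj⟩ := hneg i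
  obtain ⟨v, -, hTjv, hQ⟩ := h u w hu hw hR j ((hj u).2 hTu)
  exact (hj v).1 hTjv (hbox v hQ)

theorem boxSchema_iff_witnessCondition (hneg : ∀ i, ∃ j, ∀ a, T j a ↔ ¬ T i a)
    (hrel : ∀ i, ∃ j, ∀ a, T j a ↔ (N a → ¬ T i a)) :
    BoxSchema R Q N T ↔ WitnessCondition R Q N T :=
  ⟨witnessCondition_of_boxSchema hrel, boxSchema_of_witnessCondition hneg⟩

end Abstract

section Semantics

variable {P : Type}

theorem dsat_toD (s : DynOp P) (ψ : PForm P) (M : PrefModel P) (w : M.W) :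
    dsat s ψ.toD M w ↔ psat M ψ w := by
  induction ψ with
  | atom p => exact Iff.rfl
  | neg χ ih => simp only [dsat, psat, PForm.toD, ih]
  | and χ χ' ih ih' => simp only [dsat, psat, PForm.toD, ih, ih']

theorem psat_apply (s : DynOp P) (φ ψ : PForm P) (M : PrefModel P) (w : (s.apply M φ).W) :
    psat (s.apply M φ) ψ w ↔ psat M ψ w := by
  induction ψ with
  | atom p => exact Iff.rfl
  | neg χ ih => simp only [psat, ih]
  | and χ χ' ih ih' => simp only [psat, ih, ih']

theorem dsat_imp (s : DynOp P) (ξ ψ : DForm P) (M : PrefModel P) (w : M.W) :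
    dsat s (ξ.imp ψ) M w ↔ (dsat s ξ M w → dsat s ψ M w) := by
  simp only [DForm.imp, dsat, not_and, not_not]

variable (s : DynOp P) (M : PrefModel P) (φ : PForm P)

abbrev dynTruth (ξ : DForm P) (w : M.W) : Prop := dsat s (.dyn φ ξ) M w

theorem dynTruth_neg (ξ : DForm P) : ∃ ζ, ∀ w, dynTruth s M φ ζ w ↔ ¬ dynTruth s M φ ξ w :=
  ⟨.neg ξ, fun _ => Iff.rfl⟩

theorem dynTruth_relNeg (ξ : DForm P) :
    ∃ ζ, ∀ w, dynTruth s M φ ζ w ↔ (¬ psat M φ w → ¬ dynTruth s M φ ξ w) :=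
  ⟨(DForm.neg φ.toD).imp (.neg ξ), fun w =>
    (dsat_imp s _ _ (s.apply M φ) w).trans <|
      imp_congr_left (not_congr ((dsat_toD s φ (s.apply M φ) w).trans (psat_apply s φ φ M w)))⟩

theorem forall_dsat_schemata_iff :
    (∀ (ξ : DForm P) (w : M.W),
      dsat s ((DForm.dyn φ (.boxLe ξ)).imp
        ((DForm.neg φ.toD).imp (.boxLe ((DForm.neg φ.toD).imp (.dyn φ ξ))))) M w ∧
      dsat s ((DForm.dyn φ (.boxLt ξ)).imp
        ((DForm.neg φ.toD).imp (.boxLt ((DForm.neg φ.toD).imp (.dyn φ ξ))))) M w ∧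
      dsat s ((DForm.boxLe (.dyn φ ξ)).imp
        ((DForm.neg φ.toD).imp (.dyn φ (.boxLe ((DForm.neg φ.toD).imp ξ))))) M w ∧
      dsat s ((DForm.boxLt (.dyn φ ξ)).imp
        ((DForm.neg φ.toD).imp (.dyn φ (.boxLt ((DForm.neg φ.toD).imp ξ))))) M w) ↔
    BoxSchema M.le (s.rel M φ) (¬ psat M φ ·) (dynTruth s M φ) ∧
    BoxSchema M.lt (s.srel M φ) (¬ psat M φ ·) (dynTruth s M φ) ∧
    BoxSchema (s.rel M φ) M.le (¬ psat M φ ·) (dynTruth s M φ) ∧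
    BoxSchema (s.srel M φ) M.lt (¬ psat M φ ·) (dynTruth s M φ) := by
  simp only [BoxSchema, dynTruth, DForm.imp, dsat, not_and, not_not, dsat_toD, psat_apply,
    forall_and]
  rfl

theorem dp2Compliant_iff_boxSchemata (𝔐 : Set (PrefModel P)) :
    DP2Compliant s 𝔐 ↔ ∀ M ∈ 𝔐, ∀ φ : PForm P,
      BoxSchema M.le (s.rel M φ) (¬ psat M φ ·) (dynTruth s M φ) ∧
      BoxSchema M.lt (s.srel M φ) (¬ psat M φ ·) (dynTruth s M φ) ∧
      BoxSchema (s.rel M φ) M.le (¬ psat M φ ·) (dynTruth s M φ) ∧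
      BoxSchema (s.srel M φ) M.lt (¬ psat M φ ·) (dynTruth s M φ) := by
  simp only [boxSchema_iff_witnessCondition (dynTruth_neg s _ _) (dynTruth_relNeg s _ _),
    DP2Compliant, WitnessCondition, dynTruth, ← forall_and]
  exact forall₂_congr fun _ _ => forall_congr' fun _ => forall₄_congr fun _ _ _ _ => by tauto

end Semantics

theorem dp2_compliance_characterisation_general {P : Type}
    (𝔐 : Set (PrefModel P)) (s : DynOp P) :
    (∀ (φ : PForm P) (ξ : DForm P), ∀ M ∈ 𝔐, ∀ w : M.W,
      dsat s ((DForm.dyn φ (.boxLe ξ)).imp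
        ((DForm.neg φ.toD).imp (.boxLe ((DForm.neg φ.toD).imp (.dyn φ ξ))))) M w ∧
      dsat s ((DForm.dyn φ (.boxLt ξ)).imp
        ((DForm.neg φ.toD).imp (.boxLt ((DForm.neg φ.toD).imp (.dyn φ ξ))))) M w ∧
      dsat s ((DForm.boxLe (.dyn φ ξ)).imp
        ((DForm.neg φ.toD).imp (.dyn φ (.boxLe ((DForm.neg φ.toD).imp ξ))))) M w ∧
      dsat s ((DForm.boxLt (.dyn φ ξ)).imp
        ((DForm.neg φ.toD).imp (.dyn φ (.boxLt ((DForm.neg φ.toD).imp ξ))))) M w) ↔ DP2Compliant s 𝔐 := by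
  rw [dp2Compliant_iff_boxSchemata]
  exact ⟨fun h M hM φ => (forall_dsat_schemata_iff s M φ).1 fun ξ w => h φ ξ M hM w,
    fun h φ ξ M hM w => (forall_dsat_schemata_iff s M φ).2 (h M hM φ) ξ w⟩

theorem dp2_compliance_characterisation {P : Type}
    (𝔐 : Set (PrefModel P)) (s : DynOp P) (hclosed : ClosedOver s 𝔐) :
    (∀ (φ : PForm P) (ξ : DForm P), ∀ M ∈ 𝔐, ∀ w : M.W,
      dsat s ((DForm.dyn φ (.boxLe ξ)).imp
        ((DForm.neg φ.toD).imp (.boxLe ((DForm.neg φ.toD).imp (.dyn φ ξ))))) M w ∧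
      dsat s ((DForm.dyn φ (.boxLt ξ)).imp
        ((DForm.neg φ.toD).imp (.boxLt ((DForm.neg φ.toD).imp (.dyn φ ξ))))) M w ∧
      dsat s ((DForm.boxLe (.dyn φ ξ)).imp
        ((DForm.neg φ.toD).imp (.dyn φ (.boxLe ((DForm.neg φ.toD).imp ξ))))) M w ∧
      dsat s ((DForm.boxLt (.dyn φ ξ)).imp
        ((DForm.neg φ.toD).imp (.dyn φ (.boxLt ((DForm.neg φ.toD).imp ξ))))) M w) ↔ DP2Compliant s 𝔐 :=
  dp2_compliance_characterisation_general 𝔐 s
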